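/- arXiv:2302.01963 — 4 statements merged into one kernel-verified Lean document; each statement's English description precedes it below -/
import Mathlib

section
/- Let G be a finite group and p a probability distribution on G whose support generates G (so the random walk on G generated by p is irreducible). Then for every nontrivial irreducible representation ρ of G, the matrix I − p̂(ρ) is invertible, where p̂(ρ) = Σ_{g∈G} p(g)ρ(g). -/
open scoped ENNReal Classical
open Finset

/-- A matrix representation `ρ : G →* M_d(ℂ)` is irreducible if `d > 0` and the only
invariant subspaces of `ℂ^d` are `⊥` and `⊤`. -/
def IsIrrep {G : Type*} [Group G] {d : ℕ}
    (ρ : G →* Matrix (Fin d) (Fin d) ℂ) : Prop :=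
  0 < d ∧ ∀ W : Submodule ℂ (Fin d → ℂ),
    (∀ g : G, ∀ v ∈ W, (ρ g).mulVec v ∈ W) → W = ⊥ ∨ W = ⊤

/-- If the support of `p` generates `G` (so the random walk generated by `p` is
irreducible), then for every nontrivial irreducible representation `ρ` of `G`,
the matrix `I - p̂(ρ)` is invertible. -/
theorem statement3 {G : Type*} [Group G] [Fintype G]
    (p : G → ℝ≥0∞) (hp : ∑ g : G, p g = 1)
    (hgen : Subgroup.closure (Function.support p) = ⊤)
    {d : ℕ} (ρ : G →* Matrix (Fin d) (Fin d) ℂ)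
    (hirr : IsIrrep ρ) (hnontriv : ρ ≠ 1) :
    IsUnit ((1 : Matrix (Fin d) (Fin d) ℂ) - ∑ g : G, ((p g).toReal : ℂ) • ρ g) := by
  classical
  have hptop : ∀ g : G, p g ≠ ⊤ := by
    intro g
    have h1 : p g ≤ 1 := hp ▸ Finset.single_le_sum (fun i _ => zero_le) (mem_univ g)
    exact (h1.trans_lt ENNReal.one_lt_top).ne
  set q : G → ℝ := fun g => (p g).toReal with hqdef
  have hq0 : ∀ g, 0 ≤ q g := fun g => ENNReal.toReal_nonneg
  have hqsum : ∑ g : G, q g = 1 := by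
    have := ENNReal.toReal_sum (s := Finset.univ) (f := p) (fun a _ => hptop a)
    rw [hp] at this
    simpa using this.symm
  -- the averaged "norm" and "inner product"
  set F : (Fin d → ℂ) → ℝ :=
    fun u => ∑ h : G, ∑ i, Complex.normSq ((ρ h).mulVec u i) with hF
  set R : (Fin d → ℂ) → (Fin d → ℂ) → ℝ :=
    fun u w => ∑ h : G, ∑ i,
      ((ρ h).mulVec u i * (starRingEnd ℂ) ((ρ h).mulVec w i)).re with hR
  have hFnonneg : ∀ u, 0 ≤ F u :=
    fun u => Finset.sum_nonneg fun h _ => Finset.sum_nonneg fun i _ => Complex.normSq_nonneg _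
  have hFzero : ∀ u, F u = 0 → u = 0 := by
    intro u hu
    have h1 : ∀ h ∈ (Finset.univ : Finset G),
        (∑ i, Complex.normSq ((ρ h).mulVec u i)) = 0 :=
      (Finset.sum_eq_zero_iff_of_nonneg fun h _ =>
        Finset.sum_nonneg fun i _ => Complex.normSq_nonneg _).mp hu
    have h2 := h1 1 (mem_univ 1)
    rw [map_one, Matrix.one_mulVec] at h2
    have h3 := (Finset.sum_eq_zero_iff_of_nonneg fun i _ => Complex.normSq_nonneg _).mp h2
    funext i
    exact Complex.normSq_eq_zero.mp (h3 i (mem_univ i))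
  have hFinv : ∀ (g : G) (u : Fin d → ℂ), F ((ρ g).mulVec u) = F u := by
    intro g u
    show (∑ h : G, ∑ i, Complex.normSq ((ρ h).mulVec ((ρ g).mulVec u) i)) = _
    rw [hF]
    simp only [Matrix.mulVec_mulVec, ← map_mul]
    exact Fintype.sum_equiv (Equiv.mulRight g) _ _ fun h => rfl
  have hFR : ∀ u, F u = R u u := by
    intro u
    simp [hF, hR, Complex.normSq_apply]
  have hFsub : ∀ u w, F (u - w) = F u + F w - 2 * R u w := by
    intro u w
    simp only [hF, hR, Matrix.mulVec_sub, Pi.sub_apply, Complex.normSq_sub,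
      Finset.sum_sub_distrib, Finset.sum_add_distrib, Finset.mul_sum]
  -- reduce to injectivity of mulVec
  rw [← Matrix.mulVec_injective_iff_isUnit]
  set S : Matrix (Fin d) (Fin d) ℂ := ∑ g : G, ((q g : ℝ) : ℂ) • ρ g with hS
  suffices hker : ∀ v : Fin d → ℂ, ((1 : Matrix (Fin d) (Fin d) ℂ) - S).mulVec v = 0 → v = 0 by
    intro a b hab
    have h4 : ((1 : Matrix (Fin d) (Fin d) ℂ) - S).mulVec (a - b) = 0 := by
      rw [Matrix.mulVec_sub, hab, sub_self]
    exact sub_eq_zero.mp (hker _ h4)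
  intro v hv
  set x : G → (Fin d → ℂ) := fun g => (ρ g).mulVec v with hx
  have hvx : v = ∑ g : G, ((q g : ℝ) : ℂ) • x g := by
    have h1 : ((1 : Matrix (Fin d) (Fin d) ℂ) - S).mulVec v = v - S.mulVec v := by
      rw [Matrix.sub_mulVec, Matrix.one_mulVec]
    rw [h1] at hv
    have h2 : v = S.mulVec v := sub_eq_zero.mp hv
    rw [h2, hS]
    rw [show (∑ g : G, ((q g : ℝ) : ℂ) • ρ g).mulVec v
        = ∑ g : G, (((q g : ℝ) : ℂ) • ρ g).mulVec v
      from map_sum (Matrix.mulVec.addMonoidHomLeft v) _ _]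
    exact Finset.sum_congr rfl fun g _ => Matrix.smul_mulVec _ _ _
  -- linearity of R in the first argument against the convex combination
  have hRlin : ∀ w, R v w = ∑ g : G, q g * R (x g) w := by
    intro w
    have key : ∀ (h : G) (i : Fin d),
        ((ρ h).mulVec v i * (starRingEnd ℂ) ((ρ h).mulVec w i)).re
          = ∑ g : G, q g * ((ρ h).mulVec (x g) i * (starRingEnd ℂ) ((ρ h).mulVec w i)).re := by
      intro h i
      have h1 : (ρ h).mulVec v = ∑ g : G, ((q g : ℝ) : ℂ) • (ρ h).mulVec (x g) := by
        conv_lhs => rw [hvx, ← Matrix.mulVecLin_apply, map_sum]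
        simp [Matrix.mulVecLin_apply]
      rw [h1]
      simp only [Finset.sum_apply, Pi.smul_apply, smul_eq_mul, Finset.sum_mul]
      rw [Complex.re_sum]
      refine Finset.sum_congr rfl fun g _ => ?_
      rw [mul_assoc, Complex.re_ofReal_mul]
    rw [hR]
    simp only
    calc (∑ h : G, ∑ i, ((ρ h).mulVec v i * (starRingEnd ℂ) ((ρ h).mulVec w i)).re)
        = ∑ h : G, ∑ i, ∑ g : G,
            q g * ((ρ h).mulVec (x g) i * (starRingEnd ℂ) ((ρ h).mulVec w i)).re := by
          refine Finset.sum_congr rfl fun h _ => Finset.sum_congr rfl fun i _ => key h i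
      _ = ∑ h : G, ∑ g : G, ∑ i,
            q g * ((ρ h).mulVec (x g) i * (starRingEnd ℂ) ((ρ h).mulVec w i)).re :=
          Finset.sum_congr rfl fun h _ => Finset.sum_comm
      _ = ∑ g : G, ∑ h : G, ∑ i,
            q g * ((ρ h).mulVec (x g) i * (starRingEnd ℂ) ((ρ h).mulVec w i)).re :=
          Finset.sum_comm
      _ = ∑ g : G, q g * R (x g) w := by
          refine Finset.sum_congr rfl fun g _ => ?_
          rw [hR]
          simp only [Finset.mul_sum]
  -- the strict-convexity argument
  have hsum0 : ∑ g : G, q g * F (x g - v) = 0 := by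
    have e1 : ∀ g : G, q g * F (x g - v) = q g * (2 * F v) - 2 * (q g * R (x g) v) := by
      intro g
      rw [hFsub]
      have : F (x g) = F v := hFinv g v
      rw [this]
      ring
    calc (∑ g : G, q g * F (x g - v))
        = ∑ g : G, (q g * (2 * F v) - 2 * (q g * R (x g) v)) :=
          Finset.sum_congr rfl fun g _ => e1 g
      _ = (∑ g : G, q g) * (2 * F v) - 2 * ∑ g : G, q g * R (x g) v := by
          rw [Finset.sum_sub_distrib]
          congr 1
          · rw [Finset.sum_mul]
          · rw [Finset.mul_sum]
      _ = 0 := by rw [hqsum, ← hRlin, ← hFR]; ring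
  have heach := (Finset.sum_eq_zero_iff_of_nonneg
    fun g _ => mul_nonneg (hq0 g) (hFnonneg _)).mp hsum0
  have hfix : ∀ g ∈ Function.support p, x g = v := by
    intro g hg
    have hqpos : 0 < q g := ENNReal.toReal_pos hg (hptop g)
    have h5 := heach g (mem_univ g)
    have h6 : F (x g - v) = 0 := by
      rcases mul_eq_zero.mp h5 with h | h
      · exact absurd h hqpos.ne'
      · exact h
    exact sub_eq_zero.mp (hFzero _ h6)
  -- the stabilizer subgroup contains the support, hence is everything
  let H : Subgroup G :=
    { carrier := {g : G | (ρ g).mulVec v = v}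
      one_mem' := by simp [Matrix.one_mulVec]
      mul_mem' := by
        intro a b ha hb
        show (ρ (a * b)).mulVec v = v
        rw [map_mul, ← Matrix.mulVec_mulVec, hb, ha]
      inv_mem' := by
        intro a ha
        show (ρ a⁻¹).mulVec v = v
        have h7 : (ρ a⁻¹).mulVec ((ρ a).mulVec v) = v := by
          rw [Matrix.mulVec_mulVec, ← map_mul, inv_mul_cancel, map_one, Matrix.one_mulVec]
        rwa [show (ρ a).mulVec v = v from ha] at h7 }
  have hHall : ∀ g : G, (ρ g).mulVec v = v := by
    have hle : Subgroup.closure (Function.support p) ≤ H := by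
      rw [Subgroup.closure_le]
      intro g hg
      exact hfix g hg
    rw [hgen] at hle
    exact fun g => hle (Subgroup.mem_top g)
  -- the fixed subspace
  let W : Submodule ℂ (Fin d → ℂ) :=
    { carrier := {u : Fin d → ℂ | ∀ g : G, (ρ g).mulVec u = u}
      add_mem' := by
        intro a b ha hb g
        rw [Matrix.mulVec_add, ha g, hb g]
      zero_mem' := by
        intro g
        rw [Matrix.mulVec_zero]
      smul_mem' := by
        intro c u hu g
        rw [Matrix.mulVec_smul, hu g] }
  have hWinv : ∀ g : G, ∀ u ∈ W, (ρ g).mulVec u ∈ W := by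
    intro g u hu
    have : (ρ g).mulVec u = u := hu g
    rw [this]
    exact hu
  rcases hirr.2 W hWinv with hbot | htop
  · have hvW : v ∈ W := fun g => hHall g
    rw [hbot] at hvW
    exact hvW
  · exfalso
    apply hnontriv
    refine MonoidHom.ext fun g => ?_
    have hall : ∀ u : Fin d → ℂ, (ρ g).mulVec u = u := by
      intro u
      have : u ∈ W := htop.symm ▸ Submodule.mem_top
      exact this g
    show ρ g = 1
    ext i j
    have h5 : (ρ g).col j = Pi.single j 1 := by
      rw [← Matrix.mulVec_single_one, hall]
    have h6 := congrFun h5 i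
    rw [Matrix.col_apply] at h6
    rw [h6, Pi.single_apply, Matrix.one_apply]
end

section
/- For all integers n ≥ 2 and 0 ≤ k ≤ n−1, one has Σ_{j=1}^{n−1} (1 − cos(2πjk/n)) / (1 − cos(2πj/n)) = k(n − k). -/
open Finset

/-- For all integers `n ≥ 2` and `0 ≤ k ≤ n - 1`,
`∑_{j=1}^{n-1} (1 - cos(2πjk/n)) / (1 - cos(2πj/n)) = k (n - k)`. -/
theorem statement5 (n : ℕ) (hn : 2 ≤ n) (k : ℕ) (hk : k ≤ n - 1) :
    ∑ j ∈ Finset.Icc 1 (n - 1),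
        (1 - Real.cos (2 * Real.pi * (j : ℝ) * (k : ℝ) / (n : ℝ))) /
          (1 - Real.cos (2 * Real.pi * (j : ℝ) / (n : ℝ)))
      = (k : ℝ) * ((n : ℝ) - (k : ℝ)) := by
  have hnC : (n : ℂ) ≠ 0 := Nat.cast_ne_zero.2 (by omega)
  set ζ : ℂ := Complex.exp (2 * (Real.pi : ℂ) * Complex.I / (n : ℂ)) with hzdef
  have hζ : IsPrimitiveRoot ζ n := Complex.isPrimitiveRoot_exp n (by omega)
  have hζ0 : ζ ≠ 0 := Complex.exp_ne_zero _
  have hζn : ζ ^ n = 1 := hζ.pow_eq_one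
  have hcos : ∀ x : ℝ, 1 - Real.cos x = Complex.normSq (1 - Complex.exp (x * Complex.I)) / 2 := by
    intro x
    rw [Complex.normSq_apply]
    simp [Complex.exp_ofReal_mul_I_re, Complex.exp_ofReal_mul_I_im]
    nlinarith [Real.sin_sq_add_cos_sq x]
  have hexp : ∀ m : ℕ, Complex.exp ((2 * Real.pi * (m : ℝ) / (n : ℝ) : ℝ) * Complex.I) = ζ ^ m := by
    intro m
    rw [← Complex.exp_nat_mul]
    congr 1
    push_cast
    field_simp
  set G : ℕ → ℂ := fun j => ∑ a ∈ Finset.range k, (ζ ^ j) ^ a with hG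
  -- Step A: pointwise rewrite
  have hA : ∀ j ∈ Finset.Icc 1 (n - 1),
      (1 - Real.cos (2 * Real.pi * (j : ℝ) * (k : ℝ) / (n : ℝ))) /
        (1 - Real.cos (2 * Real.pi * (j : ℝ) / (n : ℝ)))
      = Complex.normSq (G j) := by
    intro j hj
    simp only [Finset.mem_Icc] at hj
    have hj2 : j < n := by omega
    have hne : ζ ^ j ≠ 1 := hζ.pow_ne_one_of_pos_of_lt (by omega) hj2
    have hden : Complex.normSq (1 - ζ ^ j) ≠ 0 := by
      rw [Ne, Complex.normSq_eq_zero, sub_eq_zero]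
      exact fun h => hne h.symm
    rw [hcos, hcos]
    rw [show (2 * Real.pi * (j : ℝ) * (k : ℝ) / (n : ℝ)) = (2 * Real.pi * ((j * k : ℕ) : ℝ) / (n : ℝ)) by push_cast; ring]
    rw [hexp (j * k), hexp j]
    rw [div_div_div_comm]
    norm_num
    have hfac : 1 - ζ ^ (j * k) = G j * (1 - ζ ^ j) := by
      have h := geom_sum_mul (ζ ^ j) k
      rw [pow_mul]
      simp only [hG]
      linear_combination h
    rw [hfac, Complex.normSq_mul, mul_div_assoc, div_self hden, mul_one]
  rw [Finset.sum_congr rfl hA]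
  -- Step B: sum of normSq
  have hre : ∀ j, Complex.normSq (G j) = (G j * (starRingEnd ℂ) (G j)).re := by
    intro j
    rw [Complex.mul_conj, Complex.ofReal_re]
  simp only [hre]
  rw [← Complex.re_sum]
  -- conj ζ = ζ⁻¹
  have hconj : (starRingEnd ℂ) ζ = ζ⁻¹ := by
    rw [hzdef, ← Complex.exp_conj, ← Complex.exp_neg]
    congr 1
    simp [Complex.conj_I, map_ofNat]
    ring
  have hterm : ∀ (j a b : ℕ), (ζ ^ j) ^ a * ((ζ⁻¹ ^ j) ^ b) = (ζ ^ ((a : ℤ) - (b : ℤ))) ^ j := by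
    intro j a b
    have h1 : (ζ ^ ((a : ℤ) - (b : ℤ))) ^ j = ζ ^ (a * j) * (ζ ^ (b * j))⁻¹ := by
      rw [zpow_sub₀ hζ0, zpow_natCast, zpow_natCast, div_pow, ← pow_mul, ← pow_mul,
        div_eq_mul_inv]
    rw [h1, inv_pow, inv_pow, ← pow_mul, ← pow_mul, mul_comm j a, mul_comm j b]
  have hT : ∀ j, G j * (starRingEnd ℂ) (G j)
      = ∑ a ∈ Finset.range k, ∑ b ∈ Finset.range k, (ζ ^ ((a : ℤ) - (b : ℤ))) ^ j := by
    intro j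
    simp only [hG, map_sum, map_pow, hconj]
    rw [Finset.sum_mul_sum]
    exact Finset.sum_congr rfl fun a _ => Finset.sum_congr rfl fun b _ => hterm j a b
  simp only [hT]
  have hswap : ∑ j ∈ Finset.Icc 1 (n - 1), ∑ a ∈ Finset.range k, ∑ b ∈ Finset.range k,
        (ζ ^ ((a : ℤ) - (b : ℤ))) ^ j
      = ∑ a ∈ Finset.range k, ∑ b ∈ Finset.range k, ∑ j ∈ Finset.Icc 1 (n - 1),
        (ζ ^ ((a : ℤ) - (b : ℤ))) ^ j := by
    rw [Finset.sum_comm]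
    exact Finset.sum_congr rfl fun a _ => Finset.sum_comm
  rw [hswap]
  have hIcc : Finset.Icc 1 (n - 1) = Finset.Ico 1 n := by
    rw [← Finset.Ico_add_one_right_eq_Icc]
    congr 1
    omega
  have hins : Finset.range n = insert 0 (Finset.Ico 1 n) := by
    ext x; simp; omega
  have hinner : ∀ a ∈ Finset.range k, ∀ b ∈ Finset.range k,
      ∑ j ∈ Finset.Icc 1 (n - 1), (ζ ^ ((a : ℤ) - (b : ℤ))) ^ j
      = (if a = b then ((n : ℂ) - 1) else -1) := by
    intro a ha b hb
    simp only [Finset.mem_range] at ha hb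
    by_cases hab : a = b
    · subst hab
      simp [sub_self, Nat.card_Icc, show n - 1 + 1 - 1 = n - 1 from by omega,
        Nat.cast_sub (show 1 ≤ n by omega)]
    · set w : ℂ := ζ ^ ((a : ℤ) - (b : ℤ)) with hw
      have hw1 : w ≠ 1 := by
        intro h
        have hd := (hζ.zpow_eq_one_iff_dvd _).1 h
        have habs : |(a : ℤ) - (b : ℤ)| < (n : ℤ) := by
          rw [abs_lt]; constructor <;> omega
        have := Int.eq_zero_of_abs_lt_dvd hd habs
        omega
      have hwn : w ^ n = 1 := by
        rw [hw, ← zpow_natCast, ← zpow_mul, mul_comm, zpow_mul, zpow_natCast, hζn, one_zpow]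
      have hrange : ∑ j ∈ Finset.range n, w ^ j = 0 := by
        rw [geom_sum_eq hw1, hwn]
        simp
      rw [hIcc]
      rw [hins, Finset.sum_insert (by simp)] at hrange
      simp only [pow_zero] at hrange
      simp only [if_neg hab]
      linear_combination hrange
  rw [Finset.sum_congr rfl (fun a ha => Finset.sum_congr rfl (fun b hb => hinner a ha b hb))]
  have hfin : ∑ a ∈ Finset.range k, ∑ b ∈ Finset.range k, (if a = b then ((n : ℂ) - 1) else -1)
      = (k : ℂ) * ((n : ℂ) - (k : ℂ)) := by
    have hrow : ∀ a ∈ Finset.range k,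
        ∑ b ∈ Finset.range k, (if a = b then ((n : ℂ) - 1) else -1) = (n : ℂ) - (k : ℂ) := by
      intro a ha
      have hsplit : ∀ b, (if a = b then ((n : ℂ) - 1) else -1)
          = (if a = b then (n : ℂ) else 0) - 1 := by
        intro b; split_ifs <;> ring
      simp only [hsplit]
      rw [Finset.sum_sub_distrib, Finset.sum_ite_eq, if_pos ha, Finset.sum_const,
        Finset.card_range]
      ring
    rw [Finset.sum_congr rfl hrow, Finset.sum_const, Finset.card_range]
    ring
  rw [hfin]
  rw [show ((k : ℂ) * ((n : ℂ) - (k : ℂ))) = (((k : ℝ) * ((n : ℝ) - (k : ℝ)) : ℝ) : ℂ) by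
    push_cast; ring, Complex.ofReal_re]
end

section
/- Consider the random walk on the group ℤ_2^m generated by the probability distribution assigning probability 1/m to each standard generator (0,...,0,1,0,...,0). For x ∈ ℤ_2^m with |x| = j ≥ 1 nonzero coordinates, the expected hitting time is E_0[τ_x] = m · Σ_{i odd, 1 ≤ i ≤ j} Σ_{l=0}^{m−j} C(j,i) C(m−j,l) · 1/(l + i), where C(a,b) denotes the binomial coefficient. -/
open scoped ENNReal Classical
open Finset

/-- Position of the random walk started at `x` after increments `w 0, w 1, ...`:
`X_0 = x`, `X_{s+1} = w s + X_s`. -/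
def walkPos {G : Type*} [AddGroup G] (x : G) (w : ℕ → G) : ℕ → G
  | 0 => x
  | s + 1 => w s + walkPos x w s

/-- Probability that the random walk generated by `p`, started at `x`,
has not visited `g` at any time `≤ t` (i.e. `P_x(τ_g > t)`). -/
noncomputable def hitSurvival {G : Type*} [AddGroup G] [Fintype G]
    (p : G → ℝ≥0∞) (x g : G) (t : ℕ) : ℝ≥0∞ :=
  ∑ w : Fin t → G,
    if ∀ s ≤ t, walkPos x (fun i => if h : i < t then w ⟨i, h⟩ else 0) s ≠ g
    then ∏ i, p (w i) else 0

/-- Expected hitting time `E_x[τ_g] = ∑_{t ≥ 0} P_x(τ_g > t)`. -/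
noncomputable def expHit {G : Type*} [AddGroup G] [Fintype G]
    (p : G → ℝ≥0∞) (x g : G) : ℝ≥0∞ :=
  ∑' t : ℕ, hitSurvival p x g t

section general
variable {G : Type*} [AddGroup G] [Fintype G] (p : G → ℝ≥0∞)

set_option linter.unusedSectionVars false

lemma walkPos_congr (x : G) {w w' : ℕ → G} {s : ℕ} (h : ∀ i < s, w i = w' i) :
    walkPos x w s = walkPos x w' s := by
  induction s with
  | zero => rfl
  | succ n ih =>
      show w n + walkPos x w n = w' n + walkPos x w' n
      rw [h n (by omega), ih (fun i hi => h i (by omega))]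

lemma walkPos_shift (x : G) (w : ℕ → G) (s : ℕ) :
    walkPos x w (s+1) = walkPos (w 0 + x) (fun i => w (i+1)) s := by
  induction s with
  | zero => rfl
  | succ n ih =>
      show w (n+1) + walkPos x w (n+1) = _
      rw [ih]; rfl

lemma hitSurvival_self (g : G) (t : ℕ) : hitSurvival p g g t = 0 := by
  unfold hitSurvival
  exact Finset.sum_eq_zero fun w _ => if_neg (fun h => h 0 (Nat.zero_le t) rfl)

lemma hitSurvival_zero (y g : G) (hy : y ≠ g) : hitSurvival p y g 0 = 1 := by
  unfold hitSurvival
  rw [Fintype.sum_subsingleton _ (fun i : Fin 0 => i.elim0)]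
  rw [if_pos]
  · simp
  · intro s hs
    interval_cases s
    exact hy

lemma hitSurvival_succ (y g : G) (t : ℕ) (hy : y ≠ g) :
    hitSurvival p y g (t+1) = ∑ a : G, p a * hitSurvival p (a + y) g t := by
  classical
  unfold hitSurvival
  rw [← Equiv.sum_comp (Fin.consEquiv (fun _ : Fin (t+1) => G))]
  rw [Fintype.sum_prod_type]
  refine Finset.sum_congr rfl fun a _ => ?_
  rw [Finset.mul_sum]
  refine Finset.sum_congr rfl fun v _ => ?_
  have hpad : ∀ s ≤ t,
      walkPos y (fun i => if h : i < t + 1 then (Fin.consEquiv (fun _ : Fin (t+1) => G)) (a, v) ⟨i, h⟩ else 0) (s+1)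
        = walkPos (a + y) (fun i => if h : i < t then v ⟨i, h⟩ else 0) s := by
    intro s hs
    rw [walkPos_shift]
    have h0 : (if h : (0:ℕ) < t + 1 then (Fin.consEquiv (fun _ : Fin (t+1) => G)) (a, v) ⟨0, h⟩ else 0) = a := by
      rw [dif_pos (by omega)]
      simp [Fin.consEquiv]
    rw [h0]
    refine walkPos_congr _ fun i hi => ?_
    have hi' : i < t := by omega
    rw [dif_pos (by omega : i + 1 < t + 1), dif_pos hi']
    exact Fin.cons_succ (α := fun _ : Fin (t+1) => G) a v ⟨i, hi'⟩
  have hcond : (∀ s ≤ t + 1,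
      walkPos y (fun i => if h : i < t + 1 then (Fin.consEquiv (fun _ : Fin (t+1) => G)) (a, v) ⟨i, h⟩ else 0) s ≠ g)
      ↔ (∀ s ≤ t, walkPos (a + y) (fun i => if h : i < t then v ⟨i, h⟩ else 0) s ≠ g) := by
    constructor
    · intro H s hs
      rw [← hpad s hs]
      exact H (s+1) (by omega)
    · intro H s hs
      match s with
      | 0 => exact hy
      | s + 1 =>
          rw [hpad s (by omega)]
          exact H s (by omega)
  have hprod : (∏ i : Fin (t+1), p ((Fin.consEquiv (fun _ : Fin (t+1) => G)) (a, v) i))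
      = p a * ∏ i : Fin t, p (v i) := by
    rw [Fin.prod_univ_succ]
    simp
  rw [hprod, mul_ite, mul_zero]
  exact if_congr hcond rfl rfl


lemma expHit_self (g : G) : expHit p g g = 0 := by
  unfold expHit
  simp [hitSurvival_self]

lemma expHit_succ (y g : G) (hy : y ≠ g) :
    expHit p y g = 1 + ∑ a : G, p a * expHit p (a + y) g := by
  unfold expHit
  rw [tsum_eq_zero_add' ENNReal.summable, hitSurvival_zero p y g hy]
  congr 1
  calc ∑' t : ℕ, hitSurvival p y g (t+1)
      = ∑' t : ℕ, ∑ a : G, p a * hitSurvival p (a+y) g t := by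
        exact tsum_congr fun t => hitSurvival_succ p y g t hy
    _ = ∑' t : ℕ, ∑' a : G, p a * hitSurvival p (a+y) g t := by
        exact tsum_congr fun t => (tsum_fintype _).symm
    _ = ∑' a : G, ∑' t : ℕ, p a * hitSurvival p (a+y) g t := ENNReal.tsum_comm
    _ = ∑ a : G, ∑' t : ℕ, p a * hitSurvival p (a+y) g t := tsum_fintype _
    _ = ∑ a : G, p a * ∑' t : ℕ, hitSurvival p (a+y) g t := by
        exact Finset.sum_congr rfl fun a _ => ENNReal.tsum_mul_left

lemma sum_prob_words (hp : ∑ a : G, p a = 1) (t : ℕ) :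
    ∑ w : Fin t → G, ∏ i, p (w i) = 1 := by
  have h := Finset.prod_univ_sum (fun _ : Fin t => (univ : Finset G)) (fun _ a => p a)
  rw [Fintype.piFinset_univ] at h
  rw [← h]
  simp [hp]

lemma hitSurvival_le_one (hp : ∑ a : G, p a = 1) (y g : G) (t : ℕ) :
    hitSurvival p y g t ≤ 1 := by
  unfold hitSurvival
  refine le_trans (Finset.sum_le_sum fun w _ => ?_) (le_of_eq (sum_prob_words p hp t))
  split
  · exact le_refl _
  · exact zero_le

lemma hitSurvival_add_le (y g : G) (t r : ℕ) (C : ℝ≥0∞)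
    (hC : ∀ y', hitSurvival p y' g r ≤ C) :
    hitSurvival p y g (t + r) ≤ hitSurvival p y g t * C := by
  induction t generalizing y with
  | zero =>
      by_cases hy : y = g
      · subst hy; simp [hitSurvival_self]
      · rw [hitSurvival_zero p y g hy, one_mul, zero_add]; exact hC y
  | succ n ih =>
      by_cases hy : y = g
      · subst hy; simp [hitSurvival_self]
      · rw [show n + 1 + r = (n + r) + 1 by omega, hitSurvival_succ p y g _ hy,
          hitSurvival_succ p y g n hy, Finset.sum_mul]
        refine Finset.sum_le_sum fun a _ => ?_
        rw [mul_assoc]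
        exact mul_le_mul_right (ih (a + y)) _

lemma expHit_ne_top (hp : ∑ a : G, p a = 1) (g : G) (r : ℕ) (hr : 0 < r) (B : ℝ≥0∞)
    (hB1 : B < 1) (hB : ∀ y', hitSurvival p y' g r ≤ B) (y : G) :
    expHit p y g ≠ ⊤ := by
  have key : ∀ q (y' : G), hitSurvival p y' g (r * q) ≤ B ^ q := by
    intro q
    induction q with
    | zero => intro y'; simpa using hitSurvival_le_one p hp y' g 0
    | succ n ih =>
        intro y'
        rw [show r * (n+1) = r * n + r by ring, pow_succ]
        exact le_trans (hitSurvival_add_le p y' g (r*n) r B hB)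
          (mul_le_mul' (ih y') (le_refl B))
  have key2 : ∀ t (y' : G), hitSurvival p y' g t ≤ B ^ (t / r) := by
    intro t y'
    calc hitSurvival p y' g t = hitSurvival p y' g (r * (t/r) + t % r) := by
          rw [Nat.div_add_mod]
      _ ≤ hitSurvival p y' g (r * (t/r)) * 1 :=
          hitSurvival_add_le p y' g _ _ 1 (fun y'' => hitSurvival_le_one p hp y'' g _)
      _ ≤ B ^ (t/r) := by rw [mul_one]; exact key _ y'
  have hle : expHit p y g ≤ ∑' t : ℕ, B ^ (t / r) :=
    ENNReal.tsum_le_tsum (fun t => key2 t y)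
  refine ne_top_of_le_ne_top ?_ hle
  haveI : NeZero r := ⟨hr.ne'⟩
  have he : (∑' t : ℕ, B ^ (t / r)) = ∑' qs : ℕ × Fin r, B ^ (((Nat.divModEquiv r).symm qs : ℕ) / r) :=
    (Equiv.tsum_eq (Nat.divModEquiv r).symm _).symm
  have he2 : ∀ qs : ℕ × Fin r, (((Nat.divModEquiv r).symm qs : ℕ) / r) = qs.1 := by
    intro ⟨q, s⟩
    show (q * r + (s : ℕ)) / r = q
    rw [mul_comm, Nat.mul_add_div hr, Nat.div_eq_of_lt s.isLt, add_zero]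
  rw [he]
  have he3 : (∑' qs : ℕ × Fin r, B ^ (((Nat.divModEquiv r).symm qs : ℕ) / r))
      = ∑' qs : ℕ × Fin r, B ^ qs.1 := tsum_congr fun qs => by rw [he2 qs]
  rw [he3, ENNReal.tsum_prod']
  have he4 : ∀ q : ℕ, (∑' _ : Fin r, B ^ q) = (r : ℝ≥0∞) * B ^ q := by
    intro q
    rw [tsum_fintype]
    simp [Finset.sum_const, mul_comm]
  simp only [he4]
  rw [ENNReal.tsum_mul_left, ENNReal.tsum_geometric]
  exact ENNReal.mul_ne_top (ENNReal.natCast_ne_top r)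
    (ENNReal.inv_ne_top.2 (tsub_pos_of_lt hB1).ne')

end general

noncomputable def eps : ZMod 2 → ℝ := fun b => if b = 0 then 1 else -1

noncomputable def chi {m : ℕ} (z u : Fin m → ZMod 2) : ℝ := ∏ i, eps (z i * u i)

def wt {m : ℕ} (z : Fin m → ZMod 2) : ℕ := (univ.filter fun i => z i ≠ 0).card

lemma eps_zero : eps 0 = 1 := by simp [eps]

lemma eps_add (a b : ZMod 2) : eps (a + b) = eps a * eps b := by
  rcases (by decide : ∀ c : ZMod 2, c = 0 ∨ c = 1) a with rfl | rfl <;>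
    rcases (by decide : ∀ c : ZMod 2, c = 0 ∨ c = 1) b with rfl | rfl <;>
    norm_num [eps, show (1 : ZMod 2) + 1 = 0 from rfl, show (2 : ZMod 2) = 0 from rfl] <;> decide

lemma sum_zmod2 (f : ZMod 2 → ℝ) : ∑ b : ZMod 2, f b = f 0 + f 1 := by
  rw [show (univ : Finset (ZMod 2)) = {0, 1} from by decide,
    Finset.sum_insert (by decide), Finset.sum_singleton]

section hypercube
variable {m : ℕ}

lemma chi_add (z u v : Fin m → ZMod 2) : chi z (u + v) = chi z u * chi z v := by
  unfold chi
  rw [← Finset.prod_mul_distrib]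
  refine Finset.prod_congr rfl fun i _ => ?_
  rw [Pi.add_apply, mul_add, eps_add]

lemma chi_zero (z : Fin m → ZMod 2) : chi z 0 = 1 := by
  unfold chi
  simp [eps_zero]

lemma chi_neg (z u : Fin m → ZMod 2) : chi z (-u) = chi z u := by
  have : -u = u := by
    funext i
    exact (by decide : ∀ a : ZMod 2, -a = a) (u i)
  rw [this]

lemma chi_single (z : Fin m → ZMod 2) (i : Fin m) :
    chi z (Pi.single i 1) = eps (z i) := by
  unfold chi
  rw [Finset.prod_eq_single i]
  · rw [Pi.single_eq_same, mul_one]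
  · intro k _ hk
    rw [Pi.single_eq_of_ne hk, mul_zero, eps_zero]
  · simp

lemma sum_eps (z : Fin m → ZMod 2) :
    ∑ i : Fin m, eps (z i) = (m : ℝ) - 2 * wt z := by
  unfold eps wt
  rw [Finset.sum_ite (f := fun _ => (1:ℝ)) (g := fun _ => (-1:ℝ))]
  rw [Finset.sum_const, Finset.sum_const]
  have hsplit : (univ.filter fun i => z i = 0).card + (univ.filter fun i => z i ≠ 0).card = m := by
    rw [Finset.card_filter_add_card_filter_not]
    simp
  have : (univ.filter fun i => z i = 0).card = m - (univ.filter fun i => z i ≠ 0).card := by omega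
  have hle : (univ.filter fun i => z i ≠ 0).card ≤ m := by omega
  have h1 : (univ.filter fun x => ¬ z x = 0) = (univ.filter fun i => z i ≠ 0) := rfl
  simp only [nsmul_eq_mul, mul_one, mul_neg_one, h1, this, Nat.cast_sub hle]
  ring

lemma sum_chi (u : Fin m → ZMod 2) :
    ∑ z : Fin m → ZMod 2, chi z u = if u = 0 then (2:ℝ)^m else 0 := by
  unfold chi
  have h := Finset.prod_univ_sum (fun _ : Fin m => (univ : Finset (ZMod 2)))
    (fun i b => eps (b * u i))
  rw [Fintype.piFinset_univ] at h
  rw [← h]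
  by_cases hu : u = 0
  · subst hu
    simp [sum_zmod2, eps_zero]
  · rw [if_neg hu]
    have : ∃ i, u i ≠ 0 := by
      by_contra hc
      push_neg at hc
      exact hu (funext hc)
    obtain ⟨i, hi⟩ := this
    refine Finset.prod_eq_zero (Finset.mem_univ i) ?_
    rw [sum_zmod2]
    have h1 : u i = 1 := (by decide : ∀ a : ZMod 2, a ≠ 0 → a = 1) (u i) hi
    rw [zero_mul, one_mul, h1, eps_zero]
    norm_num [eps]


lemma chi_zero_left (u : Fin m → ZMod 2) : chi (0 : Fin m → ZMod 2) u = 1 := by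
  simp [chi, eps_zero]

lemma wt_pos {z : Fin m → ZMod 2} (hz : z ≠ 0) : 0 < wt z := by
  unfold wt
  rw [Finset.card_pos]
  by_contra hc
  rw [Finset.not_nonempty_iff_eq_empty, Finset.filter_eq_empty_iff] at hc
  exact hz (funext fun i => not_not.mp (hc (Finset.mem_univ i)))

noncomputable def Tstar {m : ℕ} (x y : Fin m → ZMod 2) : ℝ :=
  ∑ z ∈ (univ.erase (0 : Fin m → ZMod 2)), (1 - chi z (x - y)) * m / (2 * wt z)

lemma Tstar_self (x : Fin m → ZMod 2) : Tstar x x = 0 := by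
  unfold Tstar
  refine Finset.sum_eq_zero fun z _ => ?_
  rw [sub_self, chi_zero, sub_self, zero_mul, zero_div]

lemma Tstar_rec (hm : 0 < m) (x y : Fin m → ZMod 2) (hxy : y ≠ x) :
    Tstar x y = 1 + (m:ℝ)⁻¹ * ∑ i : Fin m, Tstar x (Pi.single i 1 + y) := by
  have hm' : (m:ℝ) ≠ 0 := Nat.cast_ne_zero.mpr hm.ne'
  have hchi : ∀ (z : Fin m → ZMod 2) (i : Fin m),
      chi z (x - (Pi.single i 1 + y)) = chi z (x - y) * eps (z i) := by
    intro z i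
    have h : x - (Pi.single i 1 + y) = (x - y) + (-(Pi.single i 1)) := by abel
    rw [h, chi_add, chi_neg, chi_single]
  have key : ∀ z ∈ univ.erase (0 : Fin m → ZMod 2),
      (1 - chi z (x - y)) * m / (2 * wt z)
        - (m:ℝ)⁻¹ * ∑ i : Fin m, (1 - chi z (x - (Pi.single i 1 + y))) * m / (2 * wt z)
      = - chi z (x - y) := by
    intro z hz
    have hzne : z ≠ 0 := (Finset.mem_erase.1 hz).1
    have hwt : (0:ℝ) < wt z := by exact_mod_cast wt_pos hzne
    have hsum : ∑ i : Fin m, (1 - chi z (x - (Pi.single i 1 + y))) * m / (2 * wt z)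
        = ((m:ℝ) - chi z (x - y) * ((m:ℝ) - 2 * wt z)) * m / (2 * wt z) := by
      simp only [hchi]
      rw [← Finset.sum_div, ← Finset.sum_mul, Finset.sum_sub_distrib, Finset.sum_const,
        ← Finset.mul_sum, sum_eps]
      simp
    rw [hsum]
    field_simp
    ring
  have hne0 : x - y ≠ 0 := sub_ne_zero.mpr (Ne.symm hxy)
  have hsc : ∑ z ∈ univ.erase (0 : Fin m → ZMod 2), chi z (x - y) = -1 := by
    have h2 := sum_chi (x - y)
    rw [if_neg hne0] at h2
    have h3 := Finset.add_sum_erase univ (fun z => chi z (x - y))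
      (Finset.mem_univ (0 : Fin m → ZMod 2))
    rw [h2] at h3
    simp only [chi_zero_left] at h3
    linarith
  have hdiff : Tstar x y - (m:ℝ)⁻¹ * ∑ i : Fin m, Tstar x (Pi.single i 1 + y) = 1 := by
    unfold Tstar
    rw [Finset.sum_comm, Finset.mul_sum, ← Finset.sum_sub_distrib,
      Finset.sum_congr rfl key]
    rw [Finset.sum_neg_distrib, hsc]
    norm_num
  linarith

lemma statement6_harm_le (hm : 0 < m) (x : Fin m → ZMod 2) (d : (Fin m → ZMod 2) → ℝ)
    (h0 : d x = 0)
    (hrec : ∀ y, y ≠ x → d y = (m:ℝ)⁻¹ * ∑ i : Fin m, d (Pi.single i 1 + y)) :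
    ∀ y, d y ≤ 0 := by
  have hm' : (m:ℝ) ≠ 0 := Nat.cast_ne_zero.mpr hm.ne'
  have hne : (univ : Finset (Fin m → ZMod 2)).Nonempty := ⟨x, Finset.mem_univ x⟩
  set M := univ.sup' hne d with hM
  have claim1 : ∀ y, d y ≤ M := fun y => Finset.le_sup' d (Finset.mem_univ y)
  have claim2 : ∀ (k : ℕ) (y : Fin m → ZMod 2), d y = M →
      (univ.filter fun i => y i ≠ x i).card ≤ k → d x = M := by
    intro k
    induction k with
    | zero =>
        intro y hy hc
        have hempty := Finset.card_eq_zero.mp (Nat.le_zero.mp hc)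
        have : y = x := by
          funext i
          by_contra hne2
          have : i ∈ (univ.filter fun i => y i ≠ x i) := by
            simp [hne2]
          rw [hempty] at this
          exact absurd this (Finset.notMem_empty i)
        rwa [this] at hy
    | succ k ih =>
        intro y hy hc
        by_cases hyx : y = x
        · rwa [hyx] at hy
        · have hone : ∃ i₀, y i₀ ≠ x i₀ := by
            by_contra hcon
            push_neg at hcon
            exact hyx (funext hcon)
          obtain ⟨i₀, hi₀⟩ := hone
          have hrecy := hrec y hyx
          have hsumM : ∑ i : Fin m, d (Pi.single i 1 + y) = m * M := by
            rw [hy] at hrecy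
            field_simp at hrecy
            linarith
          have havg : ∑ i : Fin m, (M - d (Pi.single i 1 + y)) = 0 := by
            rw [Finset.sum_sub_distrib, Finset.sum_const, hsumM]
            simp [mul_comm]
          have hall : d (Pi.single i₀ 1 + y) = M := by
            have h := (Finset.sum_eq_zero_iff_of_nonneg
              (fun i _ => sub_nonneg.mpr (claim1 _))).mp havg i₀ (Finset.mem_univ i₀)
            linarith
          apply ih (Pi.single i₀ 1 + y) hall
          have hset : (univ.filter fun i => (Pi.single i₀ 1 + y : Fin m → ZMod 2) i ≠ x i)
              = (univ.filter fun i => y i ≠ x i).erase i₀ := by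
            ext k'
            simp only [Finset.mem_filter, Finset.mem_erase, Finset.mem_univ, true_and,
              Pi.add_apply]
            by_cases hk : k' = i₀
            · subst hk
              rw [Pi.single_eq_same]
              have : (1 : ZMod 2) + y k' = x k' :=
                (by decide : ∀ a b : ZMod 2, a ≠ b → 1 + a = b) _ _ hi₀
              simp [this]
            · rw [Pi.single_eq_of_ne hk, zero_add]
              simp [hk]
          rw [hset, Finset.card_erase_of_mem (by simp [hi₀])]
          have hpos : 0 < (univ.filter fun i => y i ≠ x i).card :=
            Finset.card_pos.mpr ⟨i₀, by simp [hi₀]⟩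
          omega
  obtain ⟨y₀, _, hy₀⟩ := Finset.exists_mem_eq_sup' hne d
  have hcard : (univ.filter fun i => y₀ i ≠ x i).card ≤ m := by
    calc (univ.filter fun i => y₀ i ≠ x i).card ≤ (univ : Finset (Fin m)).card :=
          Finset.card_filter_le _ _
      _ = m := by simp
  have hMx : d x = M := claim2 m y₀ hy₀.symm hcard
  intro y
  calc d y ≤ M := claim1 y
    _ = 0 := by rw [← hMx, h0]

lemma statement6_harm_zero (hm : 0 < m) (x : Fin m → ZMod 2) (d : (Fin m → ZMod 2) → ℝ)
    (h0 : d x = 0)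
    (hrec : ∀ y, y ≠ x → d y = (m:ℝ)⁻¹ * ∑ i : Fin m, d (Pi.single i 1 + y)) :
    ∀ y, d y = 0 := by
  intro y
  have h1 := statement6_harm_le hm x d h0 hrec y
  have h2 := statement6_harm_le hm x (fun y => -(d y)) (by simp [h0])
    (fun y hy => by simp [hrec y hy, Finset.sum_neg_distrib, mul_neg]) y
  simp at h2
  linarith

end hypercube

section prob
variable {m : ℕ}

noncomputable def pgen (m : ℕ) : (Fin m → ZMod 2) → ℝ≥0∞ :=
  fun y => if ∃ i, y = Pi.single i 1 then (m : ℝ≥0∞)⁻¹ else 0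

lemma single_injective : Function.Injective (fun i : Fin m => Pi.single i (1 : ZMod 2)) := by
  intro i i' h
  have h' : (Pi.single i 1 : Fin m → ZMod 2) = Pi.single i' 1 := h
  by_contra hne
  have := congrFun h' i
  rw [Pi.single_eq_same, Pi.single_eq_of_ne hne] at this
  exact one_ne_zero this

lemma filter_gen_eq :
    (univ.filter fun a : Fin m → ZMod 2 => ∃ i, a = Pi.single i 1)
      = univ.image (fun i : Fin m => Pi.single i (1 : ZMod 2)) := by
  ext a
  simp [eq_comm]

lemma sum_p_mul (F : (Fin m → ZMod 2) → ℝ≥0∞) :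
    ∑ a : Fin m → ZMod 2, pgen m a * F a
      = ∑ i : Fin m, (m : ℝ≥0∞)⁻¹ * F (Pi.single i 1) := by
  unfold pgen
  simp only [ite_mul, zero_mul]
  rw [← Finset.sum_filter, filter_gen_eq,
    Finset.sum_image (fun i _ i' _ h => single_injective h)]

lemma pgen_single (i : Fin m) : pgen m (Pi.single i 1) = (m : ℝ≥0∞)⁻¹ := by
  unfold pgen
  rw [if_pos ⟨i, rfl⟩]

lemma sum_pgen (hm : 0 < m) : ∑ a : Fin m → ZMod 2, pgen m a = 1 := by
  have h := sum_p_mul (m := m) (fun _ => (1:ℝ≥0∞))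
  simp only [mul_one] at h
  rw [h, Finset.sum_const, card_univ, Fintype.card_fin, nsmul_eq_mul]
  exact ENNReal.mul_inv_cancel (by exact_mod_cast hm.ne') (ENNReal.natCast_ne_top m)

lemma card_filter_lt_fin (d : ℕ) (hdm : d ≤ m) :
    (univ.filter fun k : Fin m => (k : ℕ) < d).card = d := by
  rcases Nat.lt_or_ge d m with h | h
  · rw [show (univ.filter fun k : Fin m => (k : ℕ) < d) = Finset.Iio ⟨d, h⟩ by
      ext k; simp [Fin.lt_def]]
    exact Fin.card_Iio _
  · rw [show (univ.filter fun k : Fin m => (k : ℕ) < d) = univ by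
      ext k
      simp only [Finset.mem_filter, Finset.mem_univ, true_and, iff_true]
      have := k.isLt
      omega]
    rw [Finset.card_univ, Fintype.card_fin]
    omega

lemma surv_bound (hm : 0 < m) (x y : Fin m → ZMod 2) :
    hitSurvival (pgen m) y x m ≤ 1 - ((m : ℝ≥0∞)⁻¹) ^ m := by
  by_cases hyx : y = x
  · subst hyx; rw [hitSurvival_self]; exact zero_le
  set D := univ.filter (fun i => y i ≠ x i) with hD
  set d := D.card with hdcard
  have hd1 : 0 < d := by
    apply Finset.card_pos.mpr
    have : ∃ i, y i ≠ x i := by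
      by_contra hc; push_neg at hc; exact hyx (funext hc)
    obtain ⟨i, hi⟩ := this
    exact ⟨i, by simp [hD, hi]⟩
  have hdm : d ≤ m := by
    calc d ≤ (univ : Finset (Fin m)).card := Finset.card_filter_le _ _
      _ = m := by simp
  set e := D.equivFin.symm with he
  set w₀ : Fin m → (Fin m → ZMod 2) := fun k =>
    if h : (k : ℕ) < d then Pi.single ((e ⟨(k : ℕ), h⟩ : Fin m)) 1
    else Pi.single (⟨0, hm⟩ : Fin m) 1 with hw₀
  set E := Fintype.piFinset (fun k : Fin m =>
    if (k : ℕ) < d then ({w₀ k} : Finset (Fin m → ZMod 2)) else univ) with hE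
  -- the walk along any w ∈ E reaches x at time d
  have hwalk : ∀ w ∈ E, walkPos y (fun i => if h : i < m then w ⟨i, h⟩ else 0) d = x := by
    intro w hw
    have hmem : ∀ k : Fin m, (k : ℕ) < d → w k = w₀ k := by
      intro k hk
      have := (Fintype.mem_piFinset.mp hw) k
      rw [if_pos hk, Finset.mem_singleton] at this
      exact this
    have hstep : ∀ s ≤ d, walkPos y (fun i => if h : i < m then w ⟨i, h⟩ else 0) s
        = (∑ k ∈ univ.filter (fun k : Fin d => (k : ℕ) < s),
            (Pi.single ((e k : Fin m)) 1 : Fin m → ZMod 2)) + y := by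
      intro s hs
      induction s with
      | zero =>
          rw [show (univ.filter fun k : Fin d => (k : ℕ) < 0) = ∅ by
            ext k; simp]
          simp [walkPos]
      | succ n ih =>
          have hn : n < d := by omega
          have hnm : n < m := by omega
          show (if h : n < m then w ⟨n, h⟩ else 0) + _ = _
          rw [ih (by omega), dif_pos hnm, hmem ⟨n, hnm⟩ hn]
          rw [hw₀]
          simp only [dif_pos hn]
          rw [show (univ.filter fun k : Fin d => (k : ℕ) < n + 1)
              = insert (⟨n, hn⟩ : Fin d) (univ.filter fun k : Fin d => (k : ℕ) < n) by
            ext k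
            simp only [Finset.mem_insert, Finset.mem_filter, Finset.mem_univ, true_and,
              Fin.ext_iff]
            show (k : ℕ) < n + 1 ↔ (k : ℕ) = n ∨ (k : ℕ) < n
            omega]
          rw [Finset.sum_insert (by simp)]
          abel
    have hfull := hstep d le_rfl
    rw [show (univ.filter fun k : Fin d => (k : ℕ) < d) = univ by
      ext k; simpa using k.isLt] at hfull
    have hsum1 : (∑ k : Fin d, (Pi.single ((e k : Fin m)) 1 : Fin m → ZMod 2))
        = ∑ i ∈ D, (Pi.single i 1 : Fin m → ZMod 2) := by
      rw [← Finset.sum_coe_sort D (fun i : Fin m => (Pi.single i 1 : Fin m → ZMod 2))]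
      exact Equiv.sum_comp e (fun a : {z // z ∈ D} => (Pi.single (a : Fin m) 1 : Fin m → ZMod 2))
    have hsum2 : (∑ i ∈ D, (Pi.single i 1 : Fin m → ZMod 2)) = x - y := by
      funext c
      rw [Finset.sum_apply, Finset.sum_pi_single]
      by_cases hc : c ∈ D
      · rw [if_pos hc]
        have hcne : y c ≠ x c := by
          rw [hD] at hc; exact (Finset.mem_filter.mp hc).2
        show (1 : ZMod 2) = x c - y c
        exact ((by decide : ∀ a b : ZMod 2, a ≠ b → (1 : ZMod 2) = b - a) _ _ hcne)
      · rw [if_neg hc]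
        have hceq : y c = x c := by
          by_contra hcon
          exact hc (by simp [hD, hcon])
        show (0 : ZMod 2) = x c - y c
        rw [hceq, sub_self]
    rw [hfull, hsum1, hsum2]
    abel
  -- weight of E
  have hwE : ∑ w ∈ E, ∏ i, pgen m (w i) = ((m : ℝ≥0∞)⁻¹) ^ d := by
    rw [hE, ← Finset.prod_univ_sum]
    have : ∀ k : Fin m, (∑ a ∈ (if (k : ℕ) < d then ({w₀ k} : Finset (Fin m → ZMod 2)) else univ),
        pgen m a) = if (k : ℕ) < d then (m : ℝ≥0∞)⁻¹ else 1 := by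
      intro k
      by_cases hk : (k : ℕ) < d
      · rw [if_pos hk, if_pos hk, Finset.sum_singleton]
        rw [hw₀]
        simp only [dif_pos hk]
        exact pgen_single _
      · rw [if_neg hk, if_neg hk]
        exact sum_pgen hm
    rw [Finset.prod_congr rfl (fun k _ => this k)]
    rw [Finset.prod_ite, Finset.prod_const, Finset.prod_const, one_pow, mul_one,
      card_filter_lt_fin d hdm]
  have hdne : ((m : ℝ≥0∞)⁻¹) ^ d ≠ ⊤ :=
    ENNReal.pow_ne_top (ENNReal.inv_ne_top.mpr (by exact_mod_cast hm.ne'))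
  have hsplit := Finset.sum_add_sum_compl E (fun w : Fin m → (Fin m → ZMod 2) => ∏ i, pgen m (w i))
  rw [sum_prob_words (pgen m) (sum_pgen hm) m, hwE] at hsplit
  have hEc : ∑ w ∈ Eᶜ, ∏ i, pgen m (w i) = 1 - ((m : ℝ≥0∞)⁻¹) ^ d := by
    rw [← hsplit, ENNReal.add_sub_cancel_left hdne]
  have hmain : hitSurvival (pgen m) y x m ≤ ∑ w ∈ Eᶜ, ∏ i, pgen m (w i) := by
    unfold hitSurvival
    refine le_trans (le_of_eq (Finset.sum_add_sum_compl E _).symm) ?_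
    refine le_trans (add_le_add (le_of_eq (Finset.sum_eq_zero fun w hw =>
        if_neg fun hcond => (hcond d hdm) (hwalk w hw)))
      (Finset.sum_le_sum fun w _ => ?_)) (le_of_eq (zero_add _))
    split
    · exact le_rfl
    · exact zero_le
  calc hitSurvival (pgen m) y x m ≤ 1 - ((m : ℝ≥0∞)⁻¹) ^ d := by rw [← hEc]; exact hmain
    _ ≤ 1 - ((m : ℝ≥0∞)⁻¹) ^ m := by
        refine tsub_le_tsub_left ?_ 1
        exact pow_le_pow_of_le_one zero_le
          (ENNReal.inv_le_one.mpr (by exact_mod_cast hm)) hdm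

end prob

section assemble
variable {m : ℕ}

lemma expHit_pgen_ne_top (hm : 0 < m) (x y : Fin m → ZMod 2) :
    expHit (pgen m) y x ≠ ⊤ := by
  refine expHit_ne_top (pgen m) (sum_pgen hm) x m hm (1 - ((m : ℝ≥0∞)⁻¹) ^ m) ?_
    (fun y' => surv_bound hm x y') y
  have hne : ((m : ℝ≥0∞)⁻¹) ^ m ≠ 0 :=
    pow_ne_zero _ (ENNReal.inv_ne_zero.mpr (ENNReal.natCast_ne_top m))
  exact ENNReal.sub_lt_self ENNReal.one_ne_top one_ne_zero hne

lemma expHit_real_rec (hm : 0 < m) (x y : Fin m → ZMod 2) (hy : y ≠ x) :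
    (expHit (pgen m) y x).toReal
      = 1 + (m : ℝ)⁻¹ * ∑ i : Fin m, (expHit (pgen m) (Pi.single i 1 + y) x).toReal := by
  have hfin : ∀ a : Fin m → ZMod 2, expHit (pgen m) a x ≠ ⊤ :=
    fun a => expHit_pgen_ne_top hm x a
  have h1 : expHit (pgen m) y x
      = 1 + ∑ i : Fin m, (m : ℝ≥0∞)⁻¹ * expHit (pgen m) (Pi.single i 1 + y) x := by
    rw [expHit_succ (pgen m) y x hy, sum_p_mul (fun a => expHit (pgen m) (a + y) x)]
  rw [h1]
  have hterm : ∀ i : Fin m, (m : ℝ≥0∞)⁻¹ * expHit (pgen m) (Pi.single i 1 + y) x ≠ ⊤ :=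
    fun i => ENNReal.mul_ne_top (ENNReal.inv_ne_top.mpr (by exact_mod_cast hm.ne')) (hfin _)
  rw [ENNReal.toReal_add ENNReal.one_ne_top (ENNReal.sum_ne_top.mpr fun i _ => hterm i),
    ENNReal.toReal_one, ENNReal.toReal_sum (fun i _ => hterm i)]
  congr 1
  rw [Finset.mul_sum]
  refine Finset.sum_congr rfl fun i _ => ?_
  rw [ENNReal.toReal_mul, ENNReal.toReal_inv, ENNReal.toReal_natCast]

lemma expHit_eq_Tstar (hm : 0 < m) (x : Fin m → ZMod 2) (y : Fin m → ZMod 2) :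
    (expHit (pgen m) y x).toReal = Tstar x y := by
  have key := statement6_harm_zero hm x
    (fun y => (expHit (pgen m) y x).toReal - Tstar x y) ?_ ?_ y
  · have h := key
    linarith
  · show (expHit (pgen m) x x).toReal - Tstar x x = 0
    rw [expHit_self, Tstar_self]
    simp
  · intro y hy
    show (expHit (pgen m) y x).toReal - Tstar x y
        = (m : ℝ)⁻¹ * ∑ i : Fin m,
            ((expHit (pgen m) (Pi.single i 1 + y) x).toReal - Tstar x (Pi.single i 1 + y))
    rw [expHit_real_rec hm x y hy, Tstar_rec hm x y hy, Finset.sum_sub_distrib, mul_sub]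
    ring

lemma chi_count (x z : Fin m → ZMod 2) :
    chi z x = (-1 : ℝ) ^ (((univ.filter fun i => x i ≠ 0)).filter fun i => z i ≠ 0).card := by
  unfold chi eps
  rw [Finset.prod_ite (f := fun _ => (1:ℝ)) (g := fun _ => (-1:ℝ)), Finset.prod_const,
    Finset.prod_const, one_pow, one_mul]
  have hset : (univ.filter fun i => ¬ z i * x i = 0)
      = ((univ.filter fun i => x i ≠ 0).filter fun i => z i ≠ 0) := by
    rw [Finset.filter_filter]
    ext i
    simp only [Finset.mem_filter, Finset.mem_univ, true_and]
    constructor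
    · intro h
      refine ⟨fun hx => h ?_, fun hz => h ?_⟩
      · rw [hx, mul_zero]
      · rw [hz, zero_mul]
    · rintro ⟨hx, hz⟩ hmul
      exact (mul_ne_zero hz hx) hmul
  rw [hset]

lemma wt_split (x z : Fin m → ZMod 2) :
    wt z = ((univ.filter fun i => x i ≠ 0).filter fun i => z i ≠ 0).card
      + (((univ.filter fun i => x i ≠ 0)ᶜ).filter fun i => z i ≠ 0).card := by
  unfold wt
  rw [← Finset.card_union_of_disjoint
    (Finset.disjoint_filter_filter disjoint_compl_right)]
  congr 1
  rw [← Finset.filter_union, Finset.union_compl]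

lemma Tstar_eval (hm : 0 < m) (x : Fin m → ZMod 2) (j : ℕ) (hj : 1 ≤ j)
    (hcard : (univ.filter fun i => x i ≠ 0).card = j) :
    Tstar x 0 = (m : ℝ) * ∑ i ∈ (Finset.Icc 1 j).filter (fun i => Odd i),
      ∑ l ∈ Finset.range (m - j + 1),
        ((j.choose i * (m - j).choose l : ℕ) : ℝ) / ((l + i : ℕ) : ℝ) := by
  classical
  have hAc : ((univ.filter fun i => x i ≠ 0)ᶜ).card = m - j := by
    rw [Finset.card_compl, hcard]
    simp
  have h0 : Tstar x 0 = ∑ z : Fin m → ZMod 2, (1 - chi z x) * m / (2 * wt z) := by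
    unfold Tstar
    simp only [sub_zero]
    rw [← Finset.add_sum_erase univ (fun z => (1 - chi z x) * (m : ℝ) / (2 * wt z))
      (Finset.mem_univ 0)]
    rw [chi_zero_left]
    simp
  rw [h0]
  have h1 : ∑ z : Fin m → ZMod 2, (1 - chi z x) * (m : ℝ) / (2 * wt z)
      = ∑ pq ∈ (univ.filter fun i => x i ≠ 0).powerset ×ˢ
          ((univ.filter fun i => x i ≠ 0)ᶜ).powerset,
          (1 - (-1 : ℝ) ^ pq.1.card) * m / (2 * (pq.1.card + pq.2.card)) := by
    refine Finset.sum_nbij'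
      (fun z => ((univ.filter fun i => x i ≠ 0).filter fun i => z i ≠ 0,
        ((univ.filter fun i => x i ≠ 0)ᶜ).filter fun i => z i ≠ 0))
      (fun pq => fun i => if i ∈ pq.1 ∪ pq.2 then 1 else 0) ?_ ?_ ?_ ?_ ?_
    · intro z _
      rw [Finset.mem_product]
      exact ⟨Finset.mem_powerset.mpr (Finset.filter_subset _ _),
        Finset.mem_powerset.mpr (Finset.filter_subset _ _)⟩
    · intro pq _
      exact Finset.mem_univ _
    · intro z _
      funext i
      show (if i ∈ ((univ.filter fun i => x i ≠ 0).filter fun i => z i ≠ 0)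
          ∪ (((univ.filter fun i => x i ≠ 0)ᶜ).filter fun i => z i ≠ 0)
        then (1 : ZMod 2) else 0) = z i
      by_cases hz : z i = 0
      · rw [if_neg]
        · exact hz.symm
        · simp [hz]
      · rw [if_pos]
        · exact ((by decide : ∀ a : ZMod 2, a ≠ 0 → (1 : ZMod 2) = a) _ hz)
        · by_cases hx : x i ≠ 0
          · exact Finset.mem_union_left _ (by simp [hx, hz])
          · refine Finset.mem_union_right _ ?_
            simp only [Finset.mem_filter, Finset.mem_compl, Finset.mem_univ, true_and]
            exact ⟨by simpa using hx, hz⟩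
    · rintro ⟨P, Q⟩ hpq
      rw [Finset.mem_product, Finset.mem_powerset, Finset.mem_powerset] at hpq
      obtain ⟨hP, hQ⟩ := hpq
      have hone : ∀ i : Fin m, (if i ∈ P ∪ Q then (1 : ZMod 2) else 0) ≠ 0 ↔ i ∈ P ∪ Q := by
        intro i
        by_cases hi : i ∈ P ∪ Q
        · simp [hi]
        · simp [hi]
      show ((univ.filter fun i => x i ≠ 0).filter
          (fun i => (if i ∈ P ∪ Q then (1 : ZMod 2) else 0) ≠ 0),
        ((univ.filter fun i => x i ≠ 0)ᶜ).filter
          (fun i => (if i ∈ P ∪ Q then (1 : ZMod 2) else 0) ≠ 0)) = (P, Q)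
      simp only [Prod.mk.injEq]
      constructor
      · ext i
        rw [Finset.mem_filter, hone, Finset.mem_union]
        constructor
        · rintro ⟨hiA, hiP | hiQ⟩
          · exact hiP
          · exact absurd hiA (Finset.mem_compl.mp (hQ hiQ))
        · intro hiP
          exact ⟨hP hiP, Or.inl hiP⟩
      · ext i
        rw [Finset.mem_filter, hone, Finset.mem_union]
        constructor
        · rintro ⟨hiA, hiP | hiQ⟩
          · exact absurd (hP hiP) (Finset.mem_compl.mp hiA)
          · exact hiQ
        · intro hiQ
          exact ⟨hQ hiQ, Or.inr hiQ⟩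
    · intro z _
      rw [chi_count x z, wt_split x z]
      push_cast
      ring
  rw [h1, Finset.sum_product]
  have hinner : ∀ P : Finset (Fin m),
      (∑ Q ∈ ((univ.filter fun i => x i ≠ 0)ᶜ).powerset,
        (1 - (-1 : ℝ) ^ P.card) * m / (2 * (P.card + Q.card)))
      = ∑ l ∈ Finset.range (m - j + 1),
          (m - j).choose l • ((1 - (-1 : ℝ) ^ P.card) * m / (2 * (P.card + l))) := by
    intro P
    rw [Finset.sum_powerset_apply_card
      (fun l => (1 - (-1 : ℝ) ^ P.card) * m / (2 * (P.card + l))), hAc]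
  rw [Finset.sum_congr rfl fun P _ => hinner P]
  rw [Finset.sum_powerset_apply_card
    (fun i => ∑ l ∈ Finset.range (m - j + 1),
      (m - j).choose l • ((1 - (-1 : ℝ) ^ i) * m / (2 * (i + l)))), hcard]
  rw [← Finset.sum_filter_of_ne (p := fun i => Odd i) ?hodd]
  case hodd =>
    intro i _ hne
    by_contra heven
    rw [Nat.not_odd_iff_even] at heven
    refine hne ?_
    rw [Even.neg_one_pow heven, sub_self]
    simp
  have hsets : (Finset.range (j + 1)).filter (fun i => Odd i)
      = (Finset.Icc 1 j).filter (fun i => Odd i) := by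
    ext n
    simp only [Finset.mem_filter, Finset.mem_range, Finset.mem_Icc, Nat.lt_succ_iff]
    constructor
    · rintro ⟨hn, hodd⟩
      have h2 := Nat.odd_iff.mp hodd
      exact ⟨⟨by omega, hn⟩, hodd⟩
    · rintro ⟨⟨_, h2⟩, hodd⟩
      exact ⟨h2, hodd⟩
  rw [hsets, Finset.mul_sum]
  refine Finset.sum_congr rfl fun i hi => ?_
  have hodd : Odd i := (Finset.mem_filter.mp hi).2
  have hi1 : 1 ≤ i := (Finset.mem_Icc.mp (Finset.mem_filter.mp hi).1).1
  rw [Finset.mul_sum, Finset.smul_sum]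
  refine Finset.sum_congr rfl fun l _ => ?_
  rw [Odd.neg_one_pow hodd]
  have h1 : (1 : ℝ) ≤ (i : ℝ) := by exact_mod_cast hi1
  have h2 : (0 : ℝ) ≤ (l : ℝ) := Nat.cast_nonneg l
  have hne1 : (i : ℝ) + l ≠ 0 := by linarith
  have hne2 : (l : ℝ) + i ≠ 0 := by linarith
  rw [nsmul_eq_mul, nsmul_eq_mul]
  push_cast
  field_simp
  ring

end assemble


/-- **Hitting times on the hypercube.** For the random walk on `ℤ_2^m` generated by the
uniform distribution on the standard generators, and `x` with `|x| = j ≥ 1` nonzero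
coordinates, `E_0[τ_x] = m ∑_{i odd, 1 ≤ i ≤ j} ∑_{l=0}^{m-j} C(j,i) C(m-j,l) / (l+i)`. -/
theorem statement6 (m : ℕ) (hm : 1 ≤ m) (x : Fin m → ZMod 2) (j : ℕ) (hj : 1 ≤ j)
    (hcard : (Finset.univ.filter fun i => x i ≠ 0).card = j) :
    expHit
        (fun y : Fin m → ZMod 2 => if ∃ i, y = Pi.single i 1 then (m : ℝ≥0∞)⁻¹ else 0)
        0 x =
      (m : ℝ≥0∞) *
        ∑ i ∈ (Finset.Icc 1 j).filter (fun i => Odd i),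
          ∑ l ∈ Finset.range (m - j + 1),
            ((j.choose i * (m - j).choose l : ℕ) : ℝ≥0∞) / ((l + i : ℕ) : ℝ≥0∞) := by
  have hm0 : 0 < m := hm
  show expHit (pgen m) 0 x = _
  have hfin : expHit (pgen m) 0 x ≠ ⊤ := expHit_pgen_ne_top hm0 x 0
  have hterm : ∀ i ∈ (Finset.Icc 1 j).filter (fun i => Odd i),
      ∀ l ∈ Finset.range (m - j + 1),
      ((j.choose i * (m - j).choose l : ℕ) : ℝ≥0∞) / ((l + i : ℕ) : ℝ≥0∞) ≠ ⊤ := by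
    intro i hi l _
    have hi1 : 1 ≤ i := (Finset.mem_Icc.mp (Finset.mem_filter.mp hi).1).1
    refine (ENNReal.div_lt_top (ENNReal.natCast_ne_top _) ?_).ne
    exact_mod_cast (by omega : l + i ≠ 0)
  have hsum_ne : (∑ i ∈ (Finset.Icc 1 j).filter (fun i => Odd i),
      ∑ l ∈ Finset.range (m - j + 1),
        ((j.choose i * (m - j).choose l : ℕ) : ℝ≥0∞) / ((l + i : ℕ) : ℝ≥0∞)) ≠ ⊤ :=
    ENNReal.sum_ne_top.mpr fun i hi => ENNReal.sum_ne_top.mpr fun l hl => hterm i hi l hl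
  refine (ENNReal.toReal_eq_toReal_iff' hfin
    (ENNReal.mul_ne_top (ENNReal.natCast_ne_top m) hsum_ne)).mp ?_
  rw [expHit_eq_Tstar hm0 x 0, Tstar_eval hm0 x j hj hcard]
  rw [ENNReal.toReal_mul, ENNReal.toReal_natCast]
  congr 1
  rw [ENNReal.toReal_sum (fun i hi => ENNReal.sum_ne_top.mpr fun l hl => hterm i hi l hl)]
  refine Finset.sum_congr rfl fun i hi => ?_
  rw [ENNReal.toReal_sum (fun l hl => hterm i hi l hl)]
  refine Finset.sum_congr rfl fun l _ => ?_
  rw [ENNReal.toReal_div, ENNReal.toReal_natCast, ENNReal.toReal_natCast]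
end

section
/- Let j be an odd positive integer. Then for every integer l ≥ 1, 3 · Σ_{i odd, 1 ≤ i ≤ j} C(j,i)/(l + i) ≥ Σ_{i=0}^{j} C(j,i)/(l + i), and for l = 0, 3 · Σ_{i odd, 1 ≤ i ≤ j} C(j,i)/i ≥ Σ_{i=1}^{j} C(j,i)/i, where C(j,i) denotes the binomial coefficient. -/
/-!
Write `f i = C(j,i)/(c+i)`. Near-log-concavity of the binomial coefficients,
`C(j,i)² ≤ 4 C(j,i-1) C(j,i+1)`, together with AM-GM gives `f i ≤ f (i-1) + f (i+1)` for every
even `0 < i < j`. Since `j` is odd, both neighbours of an even index are odd, so summing over the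
even indices bounds the even terms by twice the odd ones, up to the boundary term `f 0`, which is
absorbed by `f 1 + f j`.
-/

open Finset

theorem choose_succ_sq_le_four_mul {j i : ℕ} (h : i + 2 ≤ j) :
    j.choose (i + 1) ^ 2 ≤ 4 * (j.choose i * j.choose (i + 2)) := by
  obtain ⟨r, rfl⟩ := Nat.exists_eq_add_of_le h
  set n := i + 2 + r
  have h₁ := Nat.choose_succ_right_eq n i
  have h₂ := Nat.choose_succ_right_eq n (i + 1)
  rw [show n - i = r + 2 by omega] at h₁
  rw [show n - (i + 1) = r + 1 by omega] at h₂
  refine Nat.le_of_mul_le_mul_right (c := (i + 1) * (r + 1)) ?_ (by positivity)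
  calc n.choose (i + 1) ^ 2 * ((i + 1) * (r + 1))
      = (n.choose (i + 1) * (i + 1)) * (n.choose (i + 1) * (r + 1)) := by ring
    _ = n.choose i * n.choose (i + 2) * ((r + 2) * (i + 2)) := by rw [h₁, ← h₂]; ring
    _ ≤ n.choose i * n.choose (i + 2) * (4 * ((i + 1) * (r + 1))) :=
      Nat.mul_le_mul_left _ (by nlinarith)
    _ = 4 * (n.choose i * n.choose (i + 2)) * ((i + 1) * (r + 1)) := by ring

theorem div_le_div_sub_one_add_div_add_one {A B D x : ℝ} (hA : 0 ≤ A) (hD : 0 ≤ D)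
    (hB : B ^ 2 ≤ 4 * (A * D)) (hx : 1 < x) :
    B / x ≤ A / (x - 1) + D / (x + 1) := by
  have hx₁ : 0 < x - 1 := by linarith
  have hx₂ : 0 < x + 1 := by linarith
  refine le_of_sq_le_sq ?_ (by positivity)
  -- AM-GM: `(a + d)² ≥ 4ad`, and `4ad = 4AD / (x² - 1) ≥ B² / x²`.
  calc (B / x) ^ 2 = B ^ 2 / x ^ 2 := div_pow B x 2
    _ ≤ 4 * (A * D) / ((x - 1) * (x + 1)) := by
      gcongr
      nlinarith
    _ = 4 * (A / (x - 1)) * (D / (x + 1)) := by field_simp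
    _ ≤ (A / (x - 1) + D / (x + 1)) ^ 2 := by
      nlinarith [sq_nonneg (A / (x - 1) - D / (x + 1))]

theorem choose_div_le_choose_div_add (j i : ℕ) {c : ℝ} (hc : 0 < c + i) (h : i + 2 ≤ j) :
    (j.choose (i + 1) : ℝ) / (c + (i + 1 : ℕ)) ≤
      (j.choose i : ℝ) / (c + i) + (j.choose (i + 2) : ℝ) / (c + (i + 2 : ℕ)) := by
  have hsq : ((j.choose (i + 1) : ℕ) : ℝ) ^ 2 ≤ 4 * ((j.choose i : ℝ) * j.choose (i + 2)) := by
    exact_mod_cast choose_succ_sq_le_four_mul h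
  have key := div_le_div_sub_one_add_div_add_one (x := c + i + 1) (by positivity) (by positivity)
    hsq (by linarith)
  rw [add_sub_cancel_right] at key
  convert key using 2 <;> push_cast <;> ring

theorem sum_range_add_le_three_mul_sum_odd (f : ℕ → ℝ) (k : ℕ)
    (hf : ∀ m < k, f (2 * m + 2) ≤ f (2 * m + 1) + f (2 * m + 3)) :
    ∑ i ∈ range (2 * k + 2), f i + f 1 + f (2 * k + 1) ≤
      3 * ∑ m ∈ range (k + 1), f (2 * m + 1) + f 0 := by
  induction k with
  | zero => norm_num [sum_range_succ]; linarith
  | succ k ih =>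
    have ih := ih fun m hm => hf m (by omega)
    have step := hf k (by omega)
    rw [show 2 * (k + 1) + 2 = 2 * k + 2 + 1 + 1 by ring, sum_range_succ, sum_range_succ,
      sum_range_succ (fun m => f (2 * m + 1)) (k + 1)]
    ring_nf at *
    linarith

theorem sum_filter_odd_Icc {M : Type*} [AddCommMonoid M] (f : ℕ → M) (k : ℕ) :
    ∑ i ∈ (Icc 1 (2 * k + 1)).filter Odd, f i = ∑ m ∈ range (k + 1), f (2 * m + 1) := by
  symm
  refine sum_nbij' (fun m => 2 * m + 1) (fun i => i / 2) ?_ ?_ ?_ ?_ (fun _ _ => rfl)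
  all_goals intro x hx
  all_goals simp_all [Nat.odd_iff]
  all_goals omega

theorem sum_range_le_three_mul_sum_filter_odd (f : ℕ → ℝ) {j : ℕ} (hj : Odd j)
    (hf : ∀ i, Odd i → i + 2 ≤ j → f (i + 1) ≤ f i + f (i + 2)) (h₀ : f 0 ≤ f 1 + f j) :
    ∑ i ∈ range (j + 1), f i ≤ 3 * ∑ i ∈ (Icc 1 j).filter Odd, f i := by
  obtain ⟨k, rfl⟩ := hj
  have := sum_range_add_le_three_mul_sum_odd f k fun m hm =>
    hf (2 * m + 1) (odd_two_mul_add_one m) (by omega)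
  rw [sum_filter_odd_Icc]
  linarith

theorem sum_range_choose_div_le (j : ℕ) (hodd : Odd j) (c : ℝ) (hc : 0 ≤ c)
    (h₀ : 1 / c ≤ j / (c + 1) + 1 / (c + j)) :
    ∑ i ∈ range (j + 1), (j.choose i : ℝ) / (c + i) ≤
      3 * ∑ i ∈ (Icc 1 j).filter Odd, (j.choose i : ℝ) / (c + i) := by
  refine sum_range_le_three_mul_sum_filter_odd _ hodd (fun i hi hij => ?_) (by simpa using h₀)
  exact choose_div_le_choose_div_add j i (by have := hi.pos; positivity) hij

theorem statement10_general (j : ℕ) (hodd : Odd j) :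
    (∀ l : ℕ, 1 ≤ l →
        ∑ i ∈ Finset.range (j + 1), (j.choose i : ℝ) / ((l : ℝ) + (i : ℝ)) ≤
          3 * ∑ i ∈ (Finset.Icc 1 j).filter (fun i => Odd i),
            (j.choose i : ℝ) / ((l : ℝ) + (i : ℝ))) ∧
      ∑ i ∈ Finset.Icc 1 j, (j.choose i : ℝ) / (i : ℝ) ≤
        3 * ∑ i ∈ (Finset.Icc 1 j).filter (fun i => Odd i), (j.choose i : ℝ) / (i : ℝ) := by
  refine ⟨fun l hl => sum_range_choose_div_le j hodd l (by positivity) ?_, ?_⟩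
  · have hj : (1 : ℝ) ≤ j := by exact_mod_cast hodd.pos
    have hl : (1 : ℝ) ≤ l := by exact_mod_cast hl
    rw [div_add_div _ _ (by positivity) (by positivity),
      div_le_div_iff₀ (by positivity) (by positivity)]
    have : (l : ℝ) + 1 ≤ l * (l + j) := by nlinarith
    nlinarith [mul_le_mul_of_nonneg_left this (by positivity : (0 : ℝ) ≤ j)]
  · have := sum_range_choose_div_le j hodd 0 le_rfl (by rw [div_zero]; positivity)
    simp only [zero_add] at this
    -- The term `i = 0` is the junk value `1 / 0 = 0`.
    rwa [range_eq_Ico, sum_eq_sum_Ico_succ_bot (by omega), Nat.cast_zero, div_zero, zero_add] at this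

/-- For `j` an odd positive integer: for every `l ≥ 1`,
`3 ∑_{i odd, 1 ≤ i ≤ j} C(j,i)/(l+i) ≥ ∑_{i=0}^j C(j,i)/(l+i)`, and for `l = 0`,
`3 ∑_{i odd, 1 ≤ i ≤ j} C(j,i)/i ≥ ∑_{i=1}^j C(j,i)/i`. -/
theorem statement10 (j : ℕ) (hj : 0 < j) (hodd : Odd j) :
    (∀ l : ℕ, 1 ≤ l →
        ∑ i ∈ Finset.range (j + 1), (j.choose i : ℝ) / ((l : ℝ) + (i : ℝ)) ≤
          3 * ∑ i ∈ (Finset.Icc 1 j).filter (fun i => Odd i),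
            (j.choose i : ℝ) / ((l : ℝ) + (i : ℝ))) ∧
      ∑ i ∈ Finset.Icc 1 j, (j.choose i : ℝ) / (i : ℝ) ≤
        3 * ∑ i ∈ (Finset.Icc 1 j).filter (fun i => Odd i), (j.choose i : ℝ) / (i : ℝ) :=
  statement10_general j hodd
end
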